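/- For σ ≥ 2 and f ∈ [-1/2, 1/2], p_σ(1+f) ≥ (1/2)·exp(-((σ+1-f)² + 2(1+f)(σ+1-f))/(2σ²)) ≥ 0.05·exp(1/σ²). -/

import Mathlib

open Real

noncomputable def pw (σ x : ℝ) : ℝ :=
  ∑' j : ℕ, (-1 : ℝ) ^ j * Real.exp (-(((j : ℝ) + 1) ^ 2 + 2 * x * ((j : ℝ) + 1)) / (2 * σ ^ 2))

noncomputable def rw' (σ f : ℝ) : ℝ :=
  ∑' j : ℤ, (-1 : ℝ) ^ j * Real.exp (-(((j : ℝ) ^ 2 + 2 * f * (j : ℝ)) / (2 * σ ^ 2)))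

/-!
Write `pw σ x = ∑ (-1)^j g(j+1)` with `g t = exp (-(t² + 2xt)/(2σ²))`, a decreasing sequence. Since
`g t / g (t+1) = e^α` and `g (t+2) / g (t+1) = e^(-(α + 1/σ²))` with `α = (2t+1+2x)/(2σ²)`, the
inequality `2 g(t+1) ≤ g t + g(t+2)` reduces to `e^α + e^(-α-c) ≥ 2` for `c = 1/σ² ≤ α²`, which
holds once `t ≥ σ - x - 1/2`. Split the series at an odd `t = 2m+1 ≥ σ - x`: the head pairs into
nonnegative terms `a(2i) - a(2i+1)`, and on the convex tail `b` the differences `b j - b (j+1)`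
decrease, so `2 ∑ (-1)^j b j = b 0 + ∑ (-1)^j (b j - b (j+1)) ≥ b 0`. Thus `pw σ x ≥ g(2m+1)/2`,
and `2m+1 ≤ σ + 1 - f` gives the first bound. The second amounts to
`1/σ² + E/(2σ²) ≤ 9/4` for the exponent `-E/(2σ²)` of the first, and `e^(9/4) ≤ 10`.
-/

section AlternatingSeries

variable {a : ℕ → ℝ}

lemma alternating_tsum_nonneg (ha : Antitone a) (hs : Summable a) :
    0 ≤ ∑' j, (-1 : ℝ) ^ j * a j := by
  simpa using ha.alternating_series_le_tendsto hs.tendsto_alternating_series_tsum 0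

lemma sum_range_two_mul_alternating_nonneg (ha : Antitone a) (m : ℕ) :
    0 ≤ ∑ j ∈ Finset.range (2 * m), (-1 : ℝ) ^ j * a j := by
  induction m with
  | zero => simp
  | succ n ih =>
    rw [show 2 * (n + 1) = 2 * n + 1 + 1 by ring, Finset.sum_range_succ, Finset.sum_range_succ,
      pow_succ, pow_mul, neg_one_sq, one_pow, one_mul, mul_neg_one, neg_mul]
    linarith [ha (Nat.le_succ (2 * n))]

lemma half_le_alternating_tsum_of_convex (hs : Summable a)
    (hconv : ∀ j, 2 * a (j + 1) ≤ a j + a (j + 2)) :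
    a 0 / 2 ≤ ∑' j, (-1 : ℝ) ^ j * a j := by
  have hs₁ : Summable fun j => a (j + 1) := (summable_nat_add_iff 1).2 hs
  have hhead : ∑' j, (-1 : ℝ) ^ j * a j = a 0 - ∑' j, (-1 : ℝ) ^ j * a (j + 1) := by
    rw [hs.alternating.tsum_eq_zero_add, sub_eq_add_neg, ← tsum_neg]
    simp only [pow_zero, one_mul, pow_succ, mul_neg_one, neg_mul]
  have hdiff : ∑' j, (-1 : ℝ) ^ j * a j - ∑' j, (-1 : ℝ) ^ j * a (j + 1) =
      ∑' j, (-1 : ℝ) ^ j * (a j - a (j + 1)) := by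
    rw [← hs.alternating.tsum_sub hs₁.alternating]
    simp only [mul_sub]
  have hdiff_nonneg : 0 ≤ ∑' j, (-1 : ℝ) ^ j * (a j - a (j + 1)) :=
    alternating_tsum_nonneg (antitone_nat_of_succ_le fun j => by linarith [hconv j])
      (hs.sub hs₁)
  linarith

lemma half_le_alternating_tsum_of_convex_from (ha : Antitone a) (hs : Summable a) (m : ℕ)
    (hconv : ∀ j, 2 * a (j + 2 * m + 1) ≤ a (j + 2 * m) + a (j + 2 * m + 2)) :
    a (2 * m) / 2 ≤ ∑' j, (-1 : ℝ) ^ j * a j := by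
  have htail := half_le_alternating_tsum_of_convex (a := fun j => a (j + 2 * m))
    ((summable_nat_add_iff (2 * m)).2 hs)
    (fun j => by simpa only [add_right_comm] using hconv j)
  rw [← hs.alternating.sum_add_tsum_nat_add (2 * m)]
  simp only [zero_add, pow_add, pow_mul, neg_one_sq, one_pow, mul_one] at htail ⊢
  linarith [sum_range_two_mul_alternating_nonneg ha m]

end AlternatingSeries

lemma two_le_exp_add_exp_neg_add {α c : ℝ} (hα : 0 ≤ α) (hc : c ≤ α ^ 2) :
    2 ≤ exp α + exp (-(α + c)) := by
  have hα_le : α ≤ exp α - 1 := by linarith [add_one_le_exp α]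
  have hc_le : 1 - (exp α - 1) ^ 2 ≤ exp (-c) := by
    nlinarith [add_one_le_exp (-c)]
  have : 2 - exp α ≤ exp (-(α + c)) := by
    rw [neg_add, exp_add, exp_neg α, ← div_eq_inv_mul, le_div_iff₀ (exp_pos α)]
    nlinarith
  linarith

section GaussWeight

noncomputable def gaussWeight (σ x t : ℝ) : ℝ := exp (-(t ^ 2 + 2 * x * t) / (2 * σ ^ 2))

variable {σ x : ℝ}

lemma gaussWeight_antitoneOn (hx : 0 ≤ x) : AntitoneOn (gaussWeight σ x) (Set.Ici 0) := by
  intro s hs t _ hst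
  apply exp_le_exp.2
  apply div_le_div_of_nonneg_right _ (by positivity)
  nlinarith [Set.mem_Ici.1 hs]

lemma gaussWeight_add (u s : ℝ) :
    gaussWeight σ x (u + s) =
      gaussWeight σ x u * exp (-(2 * (u + x) * s + s ^ 2) / (2 * σ ^ 2)) := by
  rw [gaussWeight, gaussWeight, ← exp_add]
  congr 1
  ring

lemma gaussWeight_convex_step (hσ : 0 < σ) {t : ℝ} (ht : σ ≤ t + x + 1 / 2) :
    2 * gaussWeight σ x (t + 1) ≤ gaussWeight σ x t + gaussWeight σ x (t + 2) := by
  set α := (2 * t + 1 + 2 * x) / (2 * σ ^ 2) with hα_def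
  have hα : 1 / σ ≤ α := by
    rw [div_le_div_iff₀ hσ (by positivity)]
    nlinarith
  have hprev : gaussWeight σ x t = gaussWeight σ x (t + 1) * exp α := by
    rw [← add_neg_cancel_right t 1, gaussWeight_add, add_neg_cancel_right, hα_def]
    congr 2
    field_simp
    ring
  have hnext : gaussWeight σ x (t + 2) = gaussWeight σ x (t + 1) * exp (-(α + 1 / σ ^ 2)) := by
    rw [show t + 2 = t + 1 + 1 by ring, gaussWeight_add, hα_def]
    congr 2
    field_simp
    ring
  have key : 2 ≤ exp α + exp (-(α + 1 / σ ^ 2)) :=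
    two_le_exp_add_exp_neg_add (le_trans (by positivity) hα)
      (by rw [← one_div_pow]; exact pow_le_pow_left₀ (by positivity) hα 2)
  have hpos : 0 < gaussWeight σ x (t + 1) := exp_pos _
  rw [hprev, hnext]
  nlinarith [mul_le_mul_of_nonneg_left key hpos.le]

lemma summable_gaussWeight_nat (hσ : σ ≠ 0) (hx : 0 ≤ x) :
    Summable fun j : ℕ => gaussWeight σ x (j + 1) := by
  have h := summable_exp_nat_mul_of_ge (c := -1 / (2 * σ ^ 2)) (by
      apply div_neg_of_neg_of_pos (by norm_num); positivity)
    (f := fun j : ℕ => ((j : ℝ) + 1) ^ 2 + 2 * x * ((j : ℝ) + 1))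
    (fun j => by nlinarith [(Nat.cast_nonneg j : (0 : ℝ) ≤ j)])
  refine h.congr fun j => ?_
  rw [gaussWeight]
  congr 1
  ring

lemma half_gaussWeight_le_pw (hσ : 0 < σ) (hx : 0 ≤ x) (m : ℕ)
    (hm : σ ≤ (2 * m + 1) + x + 1 / 2) : gaussWeight σ x (2 * m + 1) / 2 ≤ pw σ x := by
  have hanti : Antitone fun j : ℕ => gaussWeight σ x (j + 1) := fun i j hij =>
    gaussWeight_antitoneOn hx (by simp; positivity) (by simp; positivity) (by gcongr)
  have h := half_le_alternating_tsum_of_convex_from hanti (summable_gaussWeight_nat hσ.ne' hx) m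
    fun j => by
      have := gaussWeight_convex_step (x := x) hσ (t := j + 2 * m + 1)
        (by linarith [(Nat.cast_nonneg j : (0 : ℝ) ≤ j)])
      push_cast
      convert this using 3
      ring
  have hpw : pw σ x = ∑' j : ℕ, (-1 : ℝ) ^ j * gaussWeight σ x (j + 1) := rfl
  rw [hpw]
  convert h using 2
  push_cast
  ring

end GaussWeight

lemma exists_odd_nat_mem_Icc {y : ℝ} (hy : -1 ≤ y) :
    ∃ m : ℕ, y ≤ 2 * m + 1 ∧ 2 * m + 1 ≤ y + 2 := by
  refine ⟨⌈(y - 1) / 2⌉₊, by linarith [Nat.le_ceil ((y - 1) / 2)], ?_⟩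
  rcases le_or_gt ((y - 1) / 2) 0 with h | h
  · rw [Nat.ceil_eq_zero.2 h]
    push_cast
    linarith
  · linarith [Nat.ceil_lt_add_one h.le]

lemma exp_nine_div_four_le_ten : exp (9 / 4) ≤ 10 := by
  have h9 : exp 9 ≤ 10 ^ 4 := by
    calc exp 9 = exp 1 ^ 9 := by rw [← exp_nat_mul]; norm_num
      _ ≤ 2.7182818286 ^ 9 := by gcongr; exact exp_one_lt_d9.le
      _ ≤ 10 ^ 4 := by norm_num
  refine le_of_pow_le_pow_left₀ (n := 4) (by norm_num) (by norm_num) ?_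
  rwa [← exp_nat_mul, show ((4 : ℕ) : ℝ) * (9 / 4) = 9 by norm_num]

lemma twentieth_exp_inv_sq_le {σ f : ℝ} (hσ : 2 ≤ σ) (hf : -(1 : ℝ) / 2 ≤ f) :
    (0.05 : ℝ) * exp (1 / σ ^ 2) ≤
      1 / 2 * exp (-((σ + 1 - f) ^ 2 + 2 * (1 + f) * (σ + 1 - f)) / (2 * σ ^ 2)) := by
  set E := (σ + 1 - f) ^ 2 + 2 * (1 + f) * (σ + 1 - f) with hE
  have hσ₀ : 0 < σ := by linarith
  have hpoly : 2 + E ≤ 9 / 2 * σ ^ 2 := by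
    rw [hE]
    nlinarith [mul_nonneg (by linarith : (0 : ℝ) ≤ σ - 2) hσ₀.le]
  have hexponent : 1 / σ ^ 2 + E / (2 * σ ^ 2) ≤ 9 / 4 := by
    rw [show 1 / σ ^ 2 + E / (2 * σ ^ 2) = (2 + E) / (2 * σ ^ 2) by field_simp,
      div_le_iff₀ (by positivity)]
    linarith
  have hsplit : exp (1 / σ ^ 2) = exp (1 / σ ^ 2 + E / (2 * σ ^ 2)) * exp (-E / (2 * σ ^ 2)) := by
    rw [← exp_add, neg_div, add_neg_cancel_right]
  rw [hsplit]
  nlinarith [exp_pos (-E / (2 * σ ^ 2)),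
    (exp_le_exp.2 hexponent).trans exp_nine_div_four_le_ten]

theorem stmt13 (σ f : ℝ) (hσ : 2 ≤ σ) (hf : f ∈ Set.Icc (-(1:ℝ)/2) (1/2)) :
    (1 / 2) * Real.exp (-((σ + 1 - f) ^ 2 + 2 * (1 + f) * (σ + 1 - f)) / (2 * σ ^ 2)) ≤
      pw σ (1 + f) ∧
    (0.05 : ℝ) * Real.exp (1 / σ ^ 2) ≤
      (1 / 2) * Real.exp (-((σ + 1 - f) ^ 2 + 2 * (1 + f) * (σ + 1 - f)) / (2 * σ ^ 2)) := by
  obtain ⟨hf₁, hf₂⟩ := hf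
  refine ⟨?_, twentieth_exp_inv_sq_le hσ hf₁⟩
  obtain ⟨m, hm_low, hm_high⟩ := exists_odd_nat_mem_Icc (y := σ - (1 + f)) (by linarith)
  have hx : (0 : ℝ) ≤ 1 + f := by linarith
  calc 1 / 2 * exp (-((σ + 1 - f) ^ 2 + 2 * (1 + f) * (σ + 1 - f)) / (2 * σ ^ 2))
      = gaussWeight σ (1 + f) (σ + 1 - f) / 2 := by rw [gaussWeight]; ring
    _ ≤ gaussWeight σ (1 + f) (2 * m + 1) / 2 := by
      gcongr
      exact gaussWeight_antitoneOn hx (by simp; positivity) (by simp; linarith) (by linarith)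
    _ ≤ pw σ (1 + f) := half_gaussWeight_le_pw (by linarith) hx m (by linarith)
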